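/- arXiv:2411.03790 — 2 statements merged into one kernel-verified Lean document; each statement's English description precedes it below -/
import Mathlib

section
/- Let {u_i}_{i∈I} be a frame for H with pre-frame operator T and frame operator S, and let A_opt ≤ B_opt be its optimal frame bounds. Then A_opt = 1/‖S^{-1}‖ = 1/‖T†‖² and B_opt = ‖S‖ = ‖T‖². -/
noncomputable section
open MulOpposite

abbrev ℍ := Quaternion ℝ

/-- A right quaternionic Hilbert space: a complete normed additive group with a right
ℍ-module structure (encoded via scalars in `ℍᵐᵒᵖ`, so `op q • v` is the right action `v.q`)
and an ℍ-valued Hermitian inner product compatible with the norm. -/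
class QuatHilbert (H : Type*) extends NormedAddCommGroup H, Module ℍᵐᵒᵖ H, CompleteSpace H where
  qinner : H → H → ℍ
  conj_symm : ∀ u v, qinner u v = star (qinner v u)
  add_right : ∀ u v w, qinner u (v + w) = qinner u v + qinner u w
  smul_right : ∀ u v (q : ℍ), qinner u (op q • v) = qinner u v * q
  norm_sq : ∀ u, ‖u‖ ^ 2 = (qinner u u).re
  norm_op_smul : ∀ (q : ℍ) (u : H), ‖op q • u‖ = ‖u‖ * ‖q‖

notation "⟪" x ", " y "⟫" => QuatHilbert.qinner x y

/-- `Ls` is the adjoint of `L`: `⟨Lu, v⟩ = ⟨u, L*v⟩` for all `u, v`. -/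
def IsAdjointPair {H K : Type*} [QuatHilbert H] [QuatHilbert K]
    (L : H →L[ℍᵐᵒᵖ] K) (Ls : K →L[ℍᵐᵒᵖ] H) : Prop :=
  ∀ (u : H) (v : K), ⟪L u, v⟫ = ⟪u, Ls v⟫

/-- Operator norm of a bounded right ℍ-linear operator. -/
def qOpNorm {E F : Type*} [NormedAddCommGroup E] [NormedAddCommGroup F]
    [Module ℍᵐᵒᵖ E] [Module ℍᵐᵒᵖ F] (L : E →L[ℍᵐᵒᵖ] F) : ℝ :=
  sInf {M : ℝ | 0 ≤ M ∧ ∀ u : E, ‖L u‖ ≤ M * ‖u‖}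

/-- `u` is a frame with frame bounds `A`, `B` :
`A‖x‖² ≤ Σ_i |⟨u_i, x⟩|² ≤ B‖x‖²` for all `x`. -/
def IsFrameWith {H : Type*} [QuatHilbert H] {I : Type*} (u : I → H) (A B : ℝ) : Prop :=
  ∀ x : H, Summable (fun i => ‖⟪u i, x⟫‖ ^ 2) ∧
    A * ‖x‖ ^ 2 ≤ ∑' i, ‖⟪u i, x⟫‖ ^ 2 ∧ (∑' i, ‖⟪u i, x⟫‖ ^ 2) ≤ B * ‖x‖ ^ 2

/-- `u` is a frame: there are bounds `0 < A ≤ B`. -/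
def IsFrame {H : Type*} [QuatHilbert H] {I : Type*} (u : I → H) : Prop :=
  ∃ A B : ℝ, 0 < A ∧ A ≤ B ∧ IsFrameWith u A B

/-- `u` is a Bessel sequence: `Σ_i |⟨u_i, x⟩|² ≤ B‖x‖²` for some `B`. -/
def IsBessel {H : Type*} [QuatHilbert H] {I : Type*} (u : I → H) : Prop :=
  ∃ B : ℝ, 0 < B ∧ ∀ x : H, Summable (fun i => ‖⟪u i, x⟫‖ ^ 2) ∧
    (∑' i, ‖⟪u i, x⟫‖ ^ 2) ≤ B * ‖x‖ ^ 2

/-- `S` is the frame operator of `u` : `S x = Σ_i u_i ⟨u_i, x⟩`. -/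
def IsFrameOp {H : Type*} [QuatHilbert H] {I : Type*} (u : I → H) (S : H →L[ℍᵐᵒᵖ] H) : Prop :=
  ∀ x : H, HasSum (fun i => op ⟪u i, x⟫ • u i) (S x)

/-- The space ℓ²(ℍ) of square-summable quaternion families. -/
abbrev lp2 (I : Type*) := lp (fun _ : I => ℍ) 2

/-- `T` is the pre-frame (synthesis) operator of `u` : `T q = Σ_i u_i q_i`. -/
def IsPreFrameOp {H : Type*} [QuatHilbert H] {I : Type*} (u : I → H)
    (T : lp2 I →L[ℍᵐᵒᵖ] H) : Prop :=
  ∀ q : lp2 I, HasSum (fun i => op (q i) • u i) (T q)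

/-- The ℓ²(ℍ) inner product `⟨p, q⟩ = Σ_i conj(p_i) q_i`. -/
def l2inner {I : Type*} (p q : lp2 I) : ℍ := ∑' i, star (p i) * q i

/-- Orthogonal complement of a set in a right quaternionic Hilbert space. -/
def orthoComp {H : Type*} [QuatHilbert H] (A : Set H) : Set H :=
  {v : H | ∀ u ∈ A, ⟪v, u⟫ = 0}

/-- Orthogonal complement in ℓ²(ℍ). -/
def l2orthoComp {I : Type*} (A : Set (lp2 I)) : Set (lp2 I) :=
  {v : lp2 I | ∀ u ∈ A, l2inner v u = 0}

section Helpers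

open QuatHilbert

lemma quat_re_le_norm (q : ℍ) : q.re ≤ ‖q‖ := by
  nlinarith [Quaternion.normSq_eq_norm_mul_self q, Quaternion.normSq_def' q, norm_nonneg q,
    sq_nonneg q.imI, sq_nonneg q.imJ, sq_nonneg q.imK, sq_nonneg (q.re - ‖q‖)]

lemma quat_star_mul_self_re (q : ℍ) : (star q * q).re = ‖q‖ ^ 2 := by
  rw [Quaternion.star_mul_self, Quaternion.re_coe, Quaternion.normSq_eq_norm_mul_self, sq]

variable {H : Type*} [QuatHilbert H]

lemma qinner_self_re (f : H) : (⟪f, f⟫).re = ‖f‖ ^ 2 := (norm_sq f).symm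

lemma qinner_zero_right (f : H) : ⟪f, (0:H)⟫ = 0 := by
  have h := add_right f 0 0
  rw [add_zero] at h
  exact (add_left_cancel (a := ⟪f, (0:H)⟫) (by rw [← h, add_zero])).symm

lemma qinner_add_left (u v w : H) : ⟪u + v, w⟫ = ⟪u, w⟫ + ⟪v, w⟫ := by
  rw [conj_symm, add_right, star_add, ← conj_symm, ← conj_symm]

lemma qinner_smul_left (u v : H) (q : ℍ) : ⟪op q • u, v⟫ = star q * ⟪u, v⟫ := by
  rw [conj_symm, smul_right, star_mul, ← conj_symm]

/-- Generic Cauchy–Schwarz for a positive hermitian operator `W`. -/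
lemma qinner_cs_aux (W : H →L[ℍᵐᵒᵖ] H)
    (herm : ∀ f g : H, ⟪W f, g⟫ = ⟪f, W g⟫)
    (pos : ∀ f : H, 0 ≤ (⟪W f, f⟫).re) (f g : H) :
    ‖⟪W f, g⟫‖ ^ 2 ≤ (⟪W f, f⟫).re * (⟪W g, g⟫).re := by
  set a := (⟪W f, f⟫).re with ha
  set b := ⟪W f, g⟫ with hb
  set c := (⟪W g, g⟫).re with hc
  have hreal : ⟪W f, f⟫ = (a : ℍ) := by
    have h1 : star ⟪W f, f⟫ = ⟪W f, f⟫ := by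
      conv_lhs => rw [herm f f, ← conj_symm]
    exact Quaternion.star_eq_self.mp h1 ▸ rfl
  have key : ∀ t : ℝ, 0 ≤ a * (t ^ 2 * ‖b‖ ^ 2) + 2 * (-(t * ‖b‖ ^ 2)) + c := by
    intro t
    have h0 := pos (op ((-(t : ℝ) : ℍ) * b) • f + g)
    set q : ℍ := (-(t : ℝ) : ℍ) * b with hq
    have hexp : ⟪W (op q • f + g), op q • f + g⟫ =
        star q * (⟪W f, f⟫ * q) + star q * ⟪W f, g⟫ + (star b * q + ⟪W g, g⟫) := by
      have h2 : ⟪W g, f⟫ = star b := by rw [conj_symm (W g) f, ← herm f g]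
      rw [map_add, ContinuousLinearMap.map_smul, qinner_add_left, add_right, add_right,
        qinner_smul_left, qinner_smul_left, smul_right, smul_right, h2]
    have hqn : ‖q‖ = |t| * ‖b‖ := by
      rw [hq, norm_mul, norm_neg, Quaternion.norm_coe, Real.norm_eq_abs]
    have e1 : (star q * (⟪W f, f⟫ * q)).re = a * (t ^ 2 * ‖b‖ ^ 2) := by
      rw [hreal, ← mul_assoc, ← Quaternion.coe_commutes, mul_assoc, Quaternion.star_mul_self,
        ← Quaternion.coe_mul, Quaternion.re_coe, Quaternion.normSq_eq_norm_mul_self, hqn]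
      rw [← sq_abs t]; ring
    have e2 : (star b * q).re = -(t * ‖b‖ ^ 2) := by
      have hq' : q = ((-t : ℝ) : ℍ) * b := by rw [hq]; push_cast; ring_nf
      rw [hq', ← mul_assoc, ← Quaternion.coe_commutes, mul_assoc, Quaternion.star_mul_self,
        ← Quaternion.coe_mul, Quaternion.re_coe, Quaternion.normSq_eq_norm_mul_self]
      ring
    have e3 : (star q * b).re = -(t * ‖b‖ ^ 2) := by
      have h4 : star (star b * q) = star q * b := by
        rw [star_mul (star b) q, star_star]
      calc (star q * b).re = (star (star b * q)).re := by rw [h4]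
      _ = (star b * q).re := Quaternion.re_star _
      _ = -(t * ‖b‖ ^ 2) := e2
    rw [hexp] at h0
    simp only [Quaternion.re_add] at h0
    rw [e1] at h0
    have hb2 : (star q * ⟪W f, g⟫).re = -(t * ‖b‖ ^ 2) := by rw [← hb, e3]
    rw [hb2, e2] at h0
    linarith
  have hbnn : (0:ℝ) ≤ ‖b‖ ^ 2 := by positivity
  rcases eq_or_lt_of_le hbnn with hb0 | hbpos
  · rw [← hb0]; exact mul_nonneg (pos f) (pos g)
  rcases eq_or_lt_of_le (pos f) with ha0 | hapos
  · exfalso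
    have ha0' : a = 0 := ha0.symm
    have := key ((c + 1) / (2 * ‖b‖ ^ 2))
    have h5 : (c + 1) / (2 * ‖b‖ ^ 2) * ‖b‖ ^ 2 = (c+1)/2 := by
      rw [div_mul_eq_mul_div, mul_div_mul_right _ _ (ne_of_gt hbpos)]
    rw [ha0', h5] at this
    simp only [zero_mul] at this
    linarith
  · have := key (1 / a)
    have h6 : (0:ℝ) < a := hapos
    have h7 : a * ((1/a) ^ 2 * ‖b‖ ^ 2) = ‖b‖^2 / a := by field_simp
    have h9 : 1/a * ‖b‖ ^ 2 = ‖b‖^2 / a := by ring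
    rw [h7, h9] at this
    have h8 : ‖b‖ ^ 2 / a ≤ c := by linarith
    calc ‖b‖ ^ 2 = (‖b‖^2 / a) * a := by field_simp
    _ ≤ c * a := by apply mul_le_mul_of_nonneg_right h8 (le_of_lt h6)
    _ = a * c := by ring

lemma qinner_cs (f g : H) : ‖⟪f, g⟫‖ ≤ ‖f‖ * ‖g‖ := by
  have h := qinner_cs_aux (ContinuousLinearMap.id ℍᵐᵒᵖ H) (fun _ _ => rfl)
    (fun f => by rw [ContinuousLinearMap.id_apply, qinner_self_re]; positivity) f g
  simp only [ContinuousLinearMap.id_apply, qinner_self_re] at h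
  have : ‖⟪f, g⟫‖ = Real.sqrt (‖⟪f, g⟫‖ ^ 2) := by rw [Real.sqrt_sq (norm_nonneg _)]
  rw [this]
  calc Real.sqrt (‖⟪f, g⟫‖ ^ 2) ≤ Real.sqrt (‖f‖^2 * ‖g‖^2) := Real.sqrt_le_sqrt h
  _ = ‖f‖ * ‖g‖ := by rw [← mul_pow, Real.sqrt_sq (by positivity)]

/-- the inner product with a fixed vector commutes with infinite sums. -/
lemma hasSum_qinner {ι : Type*} (f : H) {x : ι → H} {s : H} (h : HasSum x s) :
    HasSum (fun i => ⟪f, x i⟫) ⟪f, s⟫ := by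
  let φ : H →+ ℍ := AddMonoidHom.mk' (fun v => ⟪f, v⟫) (add_right f)
  have hcont : Continuous φ := by
    apply (LipschitzWith.of_dist_le_mul (K := ‖f‖₊) (f := φ) ?_).continuous
    intro x y
    have : φ x - φ y = φ (x - y) := by rw [map_sub]
    rw [dist_eq_norm, dist_eq_norm, this]
    calc ‖⟪f, x - y⟫‖ ≤ ‖f‖ * ‖x - y‖ := qinner_cs f (x - y)
    _ = (‖f‖₊ : ℝ) * ‖x - y‖ := by rw [coe_nnnorm]
  exact h.map φ hcont

lemma hasSum_re {ι : Type*} {x : ι → ℍ} {s : ℍ} (h : HasSum x s) :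
    HasSum (fun i => (x i).re) s.re := by
  let φ : ℍ →+ ℝ := AddMonoidHom.mk' (fun q => q.re) (fun a b => rfl)
  exact h.map φ Quaternion.continuous_re

section OpNorm

variable {E F : Type*} [NormedAddCommGroup E] [NormedAddCommGroup F]
  [Module ℍᵐᵒᵖ E] [Module ℍᵐᵒᵖ F]

def QBounded (L : E →L[ℍᵐᵒᵖ] F) : Prop := ∃ M : ℝ, 0 ≤ M ∧ ∀ u : E, ‖L u‖ ≤ M * ‖u‖

lemma qOpNorm_le (L : E →L[ℍᵐᵒᵖ] F) {M : ℝ} (hM : 0 ≤ M) (h : ∀ u, ‖L u‖ ≤ M * ‖u‖) :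
    qOpNorm L ≤ M :=
  csInf_le ⟨0, fun _ hx => hx.1⟩ ⟨hM, h⟩

lemma qOpNorm_nonneg (L : E →L[ℍᵐᵒᵖ] F) (hne : QBounded L) : 0 ≤ qOpNorm L :=
  le_csInf hne (fun _ hM => hM.1)

lemma le_qOpNorm (L : E →L[ℍᵐᵒᵖ] F) (hne : QBounded L) (u : E) :
    ‖L u‖ ≤ qOpNorm L * ‖u‖ := by
  rcases eq_or_ne u 0 with rfl | hu
  · simp [qOpNorm_nonneg L hne]
  · have hun : (0:ℝ) < ‖u‖ := norm_pos_iff.mpr hu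
    have h1 : ‖L u‖ / ‖u‖ ≤ qOpNorm L := by
      apply le_csInf hne
      intro M hM
      rw [div_le_iff₀ hun]
      exact hM.2 u
    calc ‖L u‖ = ‖L u‖ / ‖u‖ * ‖u‖ := by field_simp
    _ ≤ qOpNorm L * ‖u‖ := mul_le_mul_of_nonneg_right h1 (le_of_lt hun)

end OpNorm

section TsumCS

variable {ι : Type*}

lemma summable_mul_of_sq {a b : ι → ℝ} (ha : ∀ i, 0 ≤ a i) (hb : ∀ i, 0 ≤ b i)
    (hsa : Summable fun i => a i ^ 2) (hsb : Summable fun i => b i ^ 2) :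
    Summable fun i => a i * b i := by
  apply Summable.of_nonneg_of_le (fun i => mul_nonneg (ha i) (hb i))
    (fun i => ?_) ((hsa.add hsb).div_const 2)
  have h := sq_nonneg (a i - b i)
  nlinarith

lemma tsum_cs {a b : ι → ℝ} (ha : ∀ i, 0 ≤ a i) (hb : ∀ i, 0 ≤ b i)
    (hsa : Summable fun i => a i ^ 2) (hsb : Summable fun i => b i ^ 2) :
    ∑' i, a i * b i ≤ Real.sqrt (∑' i, a i ^ 2) * Real.sqrt (∑' i, b i ^ 2) := by
  apply Summable.tsum_le_of_sum_le (summable_mul_of_sq ha hb hsa hsb)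
  intro s
  have h1 : (∑ i ∈ s, a i * b i) ^ 2 ≤ (∑ i ∈ s, a i ^ 2) * ∑ i ∈ s, b i ^ 2 :=
    Finset.sum_mul_sq_le_sq_mul_sq s a b
  have h2 : (∑ i ∈ s, a i ^ 2) ≤ ∑' i, a i ^ 2 :=
    Summable.sum_le_tsum s (fun i _ => sq_nonneg _) hsa
  have h3 : (∑ i ∈ s, b i ^ 2) ≤ ∑' i, b i ^ 2 :=
    Summable.sum_le_tsum s (fun i _ => sq_nonneg _) hsb
  have h4 : (0:ℝ) ≤ ∑ i ∈ s, a i * b i :=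
    Finset.sum_nonneg (fun i _ => mul_nonneg (ha i) (hb i))
  have h5 : (∑ i ∈ s, a i * b i) = Real.sqrt ((∑ i ∈ s, a i * b i) ^ 2) :=
    (Real.sqrt_sq h4).symm
  rw [h5, ← Real.sqrt_mul (tsum_nonneg fun i => sq_nonneg _)]
  apply Real.sqrt_le_sqrt
  calc (∑ i ∈ s, a i * b i) ^ 2 ≤ (∑ i ∈ s, a i ^ 2) * ∑ i ∈ s, b i ^ 2 := h1
  _ ≤ (∑' i, a i ^ 2) * ∑' i, b i ^ 2 := by
      apply mul_le_mul h2 h3 (Finset.sum_nonneg fun i _ => sq_nonneg _)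
        (tsum_nonneg fun i => sq_nonneg _)

end TsumCS

section Lp2

variable {I : Type*}

lemma lp2_summable (q : lp2 I) : Summable fun i => ‖q i‖ ^ 2 := by
  have := (lp.memℓp q).summable (p := 2) (by norm_num)
  have h2 : ((2:ENNReal)).toReal = (2:ℝ) := by norm_num
  rw [h2] at this
  convert this using 2 with i
  rw [← Real.rpow_natCast ‖q i‖ 2]
  norm_num

lemma lp2_norm_sq (q : lp2 I) : ‖q‖ ^ 2 = ∑' i, ‖q i‖ ^ 2 := by
  have := lp.norm_rpow_eq_tsum (p := 2) (by norm_num) q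
  have h2 : ((2:ENNReal)).toReal = (2:ℝ) := by norm_num
  rw [h2] at this
  calc ‖q‖ ^ 2 = ‖q‖ ^ (2:ℝ) := by
        rw [← Real.rpow_natCast ‖q‖ 2]; norm_num
  _ = ∑' i, ‖q i‖ ^ (2:ℝ) := this
  _ = ∑' i, ‖q i‖ ^ 2 := by
        congr 1; funext i; rw [← Real.rpow_natCast ‖q i‖ 2]; norm_num

end Lp2

section RealFacts

lemma real_le_of_sq_le_sq {x y : ℝ} (hx : 0 ≤ x) (hy : 0 ≤ y) (h : x ^ 2 ≤ y ^ 2) : x ≤ y := by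
  nlinarith

lemma real_le_of_sq_le_mul {x c : ℝ} (hx : 0 < x) (h : x ^ 2 ≤ c * x) : x ≤ c := by
  have h2 : x * x ≤ c * x := by rwa [← sq]
  exact le_of_mul_le_mul_right h2 hx

lemma real_one_le_sq {x : ℝ} (h : 1 ≤ x) : 1 ≤ x ^ 2 := by nlinarith

end RealFacts

end Helpers
set_option maxHeartbeats 1000000 in
/-- The optimal frame bounds satisfy `A_opt = 1/‖S⁻¹‖ = 1/‖T†‖²` and
`B_opt = ‖S‖ = ‖T‖²`, where `A_opt = inf_{‖f‖=1}⟨Sf, f⟩` and `B_opt = sup_{‖f‖=1}⟨Sf, f⟩`. -/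
theorem stmt7 {H : Type*} [QuatHilbert H] [Nontrivial H] {I : Type*} [Countable I]
    (u : I → H) (hu : IsFrame u)
    (T : lp2 I →L[ℍᵐᵒᵖ] H) (hT : IsPreFrameOp u T)
    (S Sinv : H →L[ℍᵐᵒᵖ] H) (hS : IsFrameOp u S)
    (hinv : ∀ x : H, S (Sinv x) = x ∧ Sinv (S x) = x)
    (Ts : H →L[ℍᵐᵒᵖ] lp2 I) (hTs : ∀ (x : H) (i : I), (Ts x) i = ⟪u i, x⟫)
    (Td : H →L[ℍᵐᵒᵖ] lp2 I) (hTd : Td = Ts.comp Sinv) :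
    sInf {r : ℝ | ∃ f : H, ‖f‖ = 1 ∧ r = (⟪S f, f⟫).re} = 1 / qOpNorm Sinv ∧
    1 / qOpNorm Sinv = 1 / qOpNorm Td ^ 2 ∧
    sSup {r : ℝ | ∃ f : H, ‖f‖ = 1 ∧ r = (⟪S f, f⟫).re} = qOpNorm S ∧
    qOpNorm S = qOpNorm T ^ 2 := by
  classical
  obtain ⟨A, B, hA, hAB, hframe⟩ := hu
  set Q : H → ℝ := fun f => (⟪S f, f⟫).re with hQdef
  have hQsum : ∀ f : H, HasSum (fun i => ‖⟪u i, f⟫‖ ^ 2) (Q f) := by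
    intro f
    have h1 : HasSum (fun i => ⟪f, op ⟪u i, f⟫ • u i⟫) ⟪f, S f⟫ := hasSum_qinner f (hS f)
    have h2 : (fun i => ⟪f, op ⟪u i, f⟫ • u i⟫) = fun i => star ⟪u i, f⟫ * ⟪u i, f⟫ := by
      funext i
      rw [QuatHilbert.smul_right, QuatHilbert.conj_symm f (u i)]
    rw [h2] at h1
    have h3 := hasSum_re h1
    have h4 : (fun i => (star ⟪u i, f⟫ * ⟪u i, f⟫).re) = fun i => ‖⟪u i, f⟫‖ ^ 2 := by
      funext i; exact quat_star_mul_self_re _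
    rw [h4] at h3
    have h5 : (⟪f, S f⟫).re = Q f := by
      rw [QuatHilbert.conj_symm f (S f)]; exact Quaternion.re_star _
    rwa [h5] at h3
  have hQeq : ∀ f, Q f = ∑' i, ‖⟪u i, f⟫‖ ^ 2 := fun f => (hQsum f).tsum_eq.symm
  have hQnonneg : ∀ f, 0 ≤ Q f := fun f => by
    rw [hQeq]; exact tsum_nonneg fun i => sq_nonneg _
  have hQlow : ∀ f, A * ‖f‖ ^ 2 ≤ Q f := fun f => by
    rw [hQeq]; exact (hframe f).2.1
  have hQhigh : ∀ f, Q f ≤ B * ‖f‖ ^ 2 := fun f => by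
    rw [hQeq]; exact (hframe f).2.2
  have hfS : ∀ f g : H, HasSum (fun i => star ⟪u i, f⟫ * ⟪u i, g⟫) ⟪f, S g⟫ := by
    intro f g
    have h1 : HasSum (fun i => ⟪f, op ⟪u i, g⟫ • u i⟫) ⟪f, S g⟫ := hasSum_qinner f (hS g)
    have h2 : (fun i => ⟪f, op ⟪u i, g⟫ • u i⟫) = fun i => star ⟪u i, f⟫ * ⟪u i, g⟫ := by
      funext i
      rw [QuatHilbert.smul_right, QuatHilbert.conj_symm f (u i)]
    rwa [h2] at h1
  have herm : ∀ f g : H, ⟪S f, g⟫ = ⟪f, S g⟫ := by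
    intro f g
    have h2 := hfS g f
    let φ : ℍ →+ ℍ := AddMonoidHom.mk' (fun q => star q) star_add
    have h3 := h2.map φ continuous_star
    have h3' : HasSum (fun i => star ⟪u i, f⟫ * ⟪u i, g⟫) (star ⟪g, S f⟫) := by
      convert h3 using 1
      funext i
      show _ = star (star ⟪u i, g⟫ * ⟪u i, f⟫)
      rw [star_mul, star_star]
      rfl
    have h5 := (hfS f g).unique h3'
    rw [QuatHilbert.conj_symm (S f) g]
    exact h5.symm
  have hermInv : ∀ f g : H, ⟪Sinv f, g⟫ = ⟪f, Sinv g⟫ := by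
    intro f g
    have h1 : ⟪Sinv f, g⟫ = ⟪Sinv f, S (Sinv g)⟫ := by rw [(hinv g).1]
    rw [h1, ← herm, (hinv f).1]
  have posInv : ∀ f : H, 0 ≤ (⟪Sinv f, f⟫).re := by
    intro f
    have h1 : ⟪S (Sinv f), Sinv f⟫ = ⟪Sinv f, f⟫ := by
      rw [herm, (hinv f).1]
    rw [← h1]
    exact hQnonneg (Sinv f)
  set D : Set ℝ := {r : ℝ | ∃ f : H, ‖f‖ = 1 ∧ r = (⟪S f, f⟫).re} with hDdef
  have hmemD : ∀ f : H, ‖f‖ = 1 → Q f ∈ D := fun f hf => ⟨f, hf, rfl⟩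
  obtain ⟨x0, hx0⟩ := exists_ne (0 : H)
  have hnorm1 : ∀ f : H, f ≠ 0 → ‖op ((‖f‖⁻¹ : ℝ) : ℍ) • f‖ = 1 := by
    intro f hf
    rw [QuatHilbert.norm_op_smul, Quaternion.norm_coe, Real.norm_eq_abs, abs_inv,
      abs_of_nonneg (norm_nonneg f)]
    exact mul_inv_cancel₀ (norm_ne_zero_iff.mpr hf)
  have hDne : D.Nonempty := ⟨Q _, hmemD _ (hnorm1 x0 hx0)⟩
  have hDlow : ∀ r ∈ D, A ≤ r := by
    rintro r ⟨f, hf, rfl⟩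
    have h1 := hQlow f
    rw [hf] at h1
    simpa using h1
  have hDhigh : ∀ r ∈ D, r ≤ B := by
    rintro r ⟨f, hf, rfl⟩
    have h1 := hQhigh f
    rw [hf] at h1
    simpa using h1
  have hbddB : BddBelow D := ⟨A, hDlow⟩
  have hbddA : BddAbove D := ⟨B, hDhigh⟩
  set Ainf : ℝ := sInf D with hAinfdef
  set Bsup : ℝ := sSup D with hBsupdef
  have hAinf_pos : 0 < Ainf := lt_of_lt_of_le hA (le_csInf hDne hDlow)
  have hBsup_pos : 0 < Bsup := by
    obtain ⟨r0, hr0⟩ := hDne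
    exact lt_of_lt_of_le (lt_of_lt_of_le hA (hDlow r0 hr0)) (le_csSup hbddA hr0)
  have hQsmul : ∀ (f : H) (t : ℝ), Q (op ((t : ℝ) : ℍ) • f) = t ^ 2 * Q f := by
    intro f t
    show (⟪S (op ((t : ℝ) : ℍ) • f), op ((t : ℝ) : ℍ) • f⟫).re = _
    rw [map_smul, qinner_smul_left, QuatHilbert.smul_right, Quaternion.star_coe,
      Quaternion.mul_coe_eq_smul, Quaternion.coe_mul_eq_smul, Quaternion.re_smul,
      Quaternion.re_smul]
    show t * (t * Q f) = _
    ring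
  have hQlowAB : ∀ f : H, Ainf * ‖f‖ ^ 2 ≤ Q f ∧ Q f ≤ Bsup * ‖f‖ ^ 2 := by
    intro f
    rcases eq_or_ne f 0 with rfl | hf
    · have h0 : Q (0 : H) = 0 := by
        show (⟪S 0, (0 : H)⟫).re = 0
        rw [map_zero, qinner_self_re, norm_zero]
        norm_num
      rw [h0, norm_zero]
      norm_num
    · set t : ℝ := ‖f‖⁻¹ with htdef
      set f0 : H := op ((t : ℝ) : ℍ) • f with hf0def
      have h1 : ‖f0‖ = 1 := hnorm1 f hf
      have h2 : Q f0 = t ^ 2 * Q f := hQsmul f t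
      have h3 : Ainf ≤ Q f0 := csInf_le hbddB (hmemD f0 h1)
      have h4 : Q f0 ≤ Bsup := le_csSup hbddA (hmemD f0 h1)
      have hfn : (0 : ℝ) < ‖f‖ := norm_pos_iff.mpr hf
      have ht2 : t ^ 2 * ‖f‖ ^ 2 = 1 := by
        rw [htdef]; field_simp
      constructor
      · calc Ainf * ‖f‖ ^ 2 ≤ (t ^ 2 * Q f) * ‖f‖ ^ 2 := by
              rw [← h2]; exact mul_le_mul_of_nonneg_right h3 (by positivity)
        _ = Q f * (t ^ 2 * ‖f‖ ^ 2) := by ring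
        _ = Q f := by rw [ht2, mul_one]
      · calc Q f = Q f * (t ^ 2 * ‖f‖ ^ 2) := by rw [ht2, mul_one]
        _ = (t ^ 2 * Q f) * ‖f‖ ^ 2 := by ring
        _ ≤ Bsup * ‖f‖ ^ 2 := by
              rw [← h2]; exact mul_le_mul_of_nonneg_right h4 (by positivity)
  have csS := qinner_cs_aux S herm (fun f => hQnonneg f)
  have csInv := qinner_cs_aux Sinv hermInv posInv
  have hre_bound : ∀ f g : H, (⟪f, g⟫).re ≤ ‖f‖ * ‖g‖ := fun f g =>
    le_trans (quat_re_le_norm _) (qinner_cs f g)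
  have hSbound : ∀ f, ‖S f‖ ≤ Bsup * ‖f‖ := by
    intro f
    rcases eq_or_ne (S f) 0 with h0 | h0
    · rw [h0, norm_zero]; positivity
    · have h2 : ‖⟪S f, S f⟫‖ ^ 2 ≤ Q f * Q (S f) := csS f (S f)
      have h3 : ‖S f‖ ^ 2 ≤ ‖⟪S f, S f⟫‖ := by
        rw [← qinner_self_re (S f)]
        exact quat_re_le_norm _
      have h4 : Q f ≤ Bsup * ‖f‖ ^ 2 := (hQlowAB f).2
      have h5 : Q (S f) ≤ Bsup * ‖S f‖ ^ 2 := (hQlowAB (S f)).2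
      have hn : (0 : ℝ) < ‖S f‖ := norm_pos_iff.mpr h0
      have h6 : ‖S f‖ ^ 2 ≤ Bsup * ‖f‖ * ‖S f‖ := by
        have h7 : (‖S f‖ ^ 2) ^ 2 ≤ (Bsup * ‖f‖ * ‖S f‖) ^ 2 := by
          calc (‖S f‖ ^ 2) ^ 2 ≤ ‖⟪S f, S f⟫‖ ^ 2 := pow_le_pow_left₀ (sq_nonneg _) h3 2
          _ ≤ Q f * Q (S f) := h2
          _ ≤ (Bsup * ‖f‖ ^ 2) * (Bsup * ‖S f‖ ^ 2) := by
                apply mul_le_mul h4 h5 (hQnonneg (S f)) (by positivity)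
          _ = (Bsup * ‖f‖ * ‖S f‖) ^ 2 := by ring
        exact real_le_of_sq_le_sq (by positivity) (by positivity) h7
      exact real_le_of_sq_le_mul hn h6
  have hBsup_nonneg : (0 : ℝ) ≤ Bsup := le_of_lt hBsup_pos
  have hSQB : QBounded S := ⟨Bsup, hBsup_nonneg, hSbound⟩
  have hsup_le : Bsup ≤ qOpNorm S := by
    apply csSup_le hDne
    rintro r ⟨f, hf, rfl⟩
    calc (⟪S f, f⟫).re ≤ ‖S f‖ * ‖f‖ := hre_bound _ _
    _ ≤ (qOpNorm S * ‖f‖) * ‖f‖ :=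
        mul_le_mul_of_nonneg_right (le_qOpNorm S hSQB f) (norm_nonneg f)
    _ = qOpNorm S := by rw [hf]; ring
  have hSnorm : qOpNorm S = Bsup := le_antisymm (qOpNorm_le S hBsup_nonneg hSbound) hsup_le
  have hSinvBound : ∀ f, ‖Sinv f‖ ≤ Ainf⁻¹ * ‖f‖ := by
    intro f
    rcases eq_or_ne (Sinv f) 0 with h0 | h0
    · rw [h0, norm_zero]; positivity
    · have h1 : Ainf * ‖Sinv f‖ ^ 2 ≤ Q (Sinv f) := (hQlowAB (Sinv f)).1
      have h2 : Q (Sinv f) ≤ ‖S (Sinv f)‖ * ‖Sinv f‖ := hre_bound (S (Sinv f)) (Sinv f)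
      rw [(hinv f).1] at h2
      have hgn : (0 : ℝ) < ‖Sinv f‖ := norm_pos_iff.mpr h0
      have h4 : Ainf * ‖Sinv f‖ ≤ ‖f‖ := by
        have h5 : (Ainf * ‖Sinv f‖) * ‖Sinv f‖ ≤ ‖f‖ * ‖Sinv f‖ := by
          calc (Ainf * ‖Sinv f‖) * ‖Sinv f‖ = Ainf * ‖Sinv f‖ ^ 2 := by ring
          _ ≤ Q (Sinv f) := h1
          _ ≤ ‖f‖ * ‖Sinv f‖ := h2
        exact le_of_mul_le_mul_right h5 hgn
      calc ‖Sinv f‖ = Ainf⁻¹ * (Ainf * ‖Sinv f‖) := by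
            field_simp
      _ ≤ Ainf⁻¹ * ‖f‖ := mul_le_mul_of_nonneg_left h4 (by positivity)
  have hSinvQB : QBounded Sinv := ⟨Ainf⁻¹, by positivity, hSinvBound⟩
  have hqSinv_le : qOpNorm Sinv ≤ Ainf⁻¹ := qOpNorm_le Sinv (by positivity) hSinvBound
  have hqSinv_pos : (0 : ℝ) < qOpNorm Sinv := by
    have h1 : ‖x0‖ ≤ qOpNorm Sinv * ‖S x0‖ := by
      have h2 := le_qOpNorm Sinv hSinvQB (S x0)
      rwa [(hinv x0).2] at h2
    have hx0n : (0 : ℝ) < ‖x0‖ := norm_pos_iff.mpr hx0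
    rcases lt_or_ge 0 (qOpNorm Sinv) with h | h
    · exact h
    · exfalso
      have h3 : qOpNorm Sinv * ‖S x0‖ ≤ 0 := mul_nonpos_of_nonpos_of_nonneg h (norm_nonneg _)
      linarith
  have hDlow2 : ∀ r ∈ D, (qOpNorm Sinv)⁻¹ ≤ r := by
    rintro r ⟨f, hf, rfl⟩
    have h1 : (1 : ℝ) = (⟪f, f⟫).re := by rw [qinner_self_re, hf]; norm_num
    have h2 : (1 : ℝ) ≤ ‖⟪S (Sinv f), f⟫‖ := by
      rw [(hinv f).1]
      calc (1 : ℝ) = (⟪f, f⟫).re := h1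
      _ ≤ ‖⟪f, f⟫‖ := quat_re_le_norm _
    have h2' : (1 : ℝ) ≤ ‖⟪S (Sinv f), f⟫‖ ^ 2 := real_one_le_sq h2
    have h3 : ‖⟪S (Sinv f), f⟫‖ ^ 2 ≤ Q (Sinv f) * Q f := csS (Sinv f) f
    have h4 : Q (Sinv f) ≤ qOpNorm Sinv := by
      have h5 : Q (Sinv f) = (⟪f, Sinv f⟫).re := by
        show (⟪S (Sinv f), Sinv f⟫).re = _
        rw [(hinv f).1]
      rw [h5]
      calc (⟪f, Sinv f⟫).re ≤ ‖f‖ * ‖Sinv f‖ := hre_bound _ _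
      _ ≤ ‖f‖ * (qOpNorm Sinv * ‖f‖) :=
          mul_le_mul_of_nonneg_left (le_qOpNorm Sinv hSinvQB f) (norm_nonneg f)
      _ = qOpNorm Sinv := by rw [hf]; ring
    have h6 : (1 : ℝ) ≤ qOpNorm Sinv * Q f := by
      have h7 : Q (Sinv f) * Q f ≤ qOpNorm Sinv * Q f :=
        mul_le_mul_of_nonneg_right h4 (hQnonneg f)
      linarith [le_trans h2' h3]
    show (qOpNorm Sinv)⁻¹ ≤ Q f
    rw [inv_eq_one_div, div_le_iff₀ hqSinv_pos, mul_comm]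
    exact h6
  have hAinf_eq : Ainf = (qOpNorm Sinv)⁻¹ := by
    apply le_antisymm
    · have h1 := inv_anti₀ hqSinv_pos hqSinv_le
      rwa [inv_inv] at h1
    · exact le_csInf hDne hDlow2
  have hTsnorm : ∀ f : H, ‖Ts f‖ ^ 2 = Q f := by
    intro f
    rw [lp2_norm_sq, hQeq f]
    congr 1
    funext i
    rw [hTs f i]
  have hScomp : ∀ f, S f = T (Ts f) := by
    intro f
    have h1 := hT (Ts f)
    have h2 : (fun i => op ((Ts f) i) • u i) = fun i => op ⟪u i, f⟫ • u i := by
      funext i; rw [hTs f i]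
    rw [h2] at h1
    exact (hS f).unique h1
  have hTbound : ∀ q : lp2 I, ‖T q‖ ≤ Real.sqrt Bsup * ‖q‖ := by
    intro q
    rcases eq_or_ne (T q) 0 with h0 | h0
    · rw [h0, norm_zero]; positivity
    · have h1 : HasSum (fun i => ⟪T q, op (q i) • u i⟫) ⟪T q, T q⟫ :=
        hasSum_qinner (T q) (hT q)
      have h2 : (fun i => ⟪T q, op (q i) • u i⟫) = fun i => ⟪T q, u i⟫ * q i := by
        funext i; rw [QuatHilbert.smul_right]
      rw [h2] at h1
      have h3 := hasSum_re h1
      have h4 : (⟪T q, T q⟫).re = ‖T q‖ ^ 2 := qinner_self_re _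
      rw [h4] at h3
      have h5 : ∀ i, (⟪T q, u i⟫ * q i).re ≤ ‖⟪u i, T q⟫‖ * ‖q i‖ := by
        intro i
        calc (⟪T q, u i⟫ * q i).re ≤ ‖⟪T q, u i⟫ * q i‖ := quat_re_le_norm _
        _ = ‖⟪T q, u i⟫‖ * ‖q i‖ := norm_mul _ _
        _ = ‖⟪u i, T q⟫‖ * ‖q i‖ := by
            rw [QuatHilbert.conj_symm (T q) (u i), Quaternion.norm_star]
      have hsum1 : Summable fun i => ‖⟪u i, T q⟫‖ ^ 2 := (hframe (T q)).1
      have hsum2 : Summable fun i => ‖q i‖ ^ 2 := lp2_summable q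
      have hsum3 : Summable fun i => ‖⟪u i, T q⟫‖ * ‖q i‖ :=
        summable_mul_of_sq (fun _ => norm_nonneg _) (fun _ => norm_nonneg _) hsum1 hsum2
      have h6 : ‖T q‖ ^ 2 ≤ ∑' i, ‖⟪u i, T q⟫‖ * ‖q i‖ := by
        rw [← h3.tsum_eq]
        exact Summable.tsum_le_tsum h5 h3.summable hsum3
      have h7 := tsum_cs (fun i => norm_nonneg (⟪u i, T q⟫)) (fun i => norm_nonneg (q i))
        hsum1 hsum2
      have h8 : ∑' i, ‖⟪u i, T q⟫‖ ^ 2 = Q (T q) := (hQeq (T q)).symm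
      have h9 : Real.sqrt (∑' i, ‖q i‖ ^ 2) = ‖q‖ := by
        rw [← lp2_norm_sq, Real.sqrt_sq (norm_nonneg q)]
      rw [h8, h9] at h7
      have h10 : Real.sqrt (Q (T q)) ≤ Real.sqrt Bsup * ‖T q‖ := by
        calc Real.sqrt (Q (T q)) ≤ Real.sqrt (Bsup * ‖T q‖ ^ 2) :=
              Real.sqrt_le_sqrt (hQlowAB (T q)).2
        _ = Real.sqrt Bsup * ‖T q‖ := by
              rw [Real.sqrt_mul hBsup_nonneg, Real.sqrt_sq (norm_nonneg _)]
      have hvn : (0 : ℝ) < ‖T q‖ := norm_pos_iff.mpr h0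
      have h12 : ‖T q‖ ^ 2 ≤ (Real.sqrt Bsup * ‖q‖) * ‖T q‖ := by
        calc ‖T q‖ ^ 2 ≤ ∑' i, ‖⟪u i, T q⟫‖ * ‖q i‖ := h6
        _ ≤ Real.sqrt (Q (T q)) * ‖q‖ := h7
        _ ≤ Real.sqrt Bsup * ‖T q‖ * ‖q‖ :=
            mul_le_mul_of_nonneg_right h10 (norm_nonneg q)
        _ = (Real.sqrt Bsup * ‖q‖) * ‖T q‖ := by ring
      exact real_le_of_sq_le_mul hvn h12
  have hTQB : QBounded T := ⟨Real.sqrt Bsup, Real.sqrt_nonneg _, hTbound⟩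
  have hqT_nonneg : (0 : ℝ) ≤ qOpNorm T := qOpNorm_nonneg T hTQB
  have hTsBound : ∀ f, ‖Ts f‖ ≤ qOpNorm T * ‖f‖ := by
    intro f
    rcases eq_or_ne (Ts f) 0 with h0 | h0
    · rw [h0, norm_zero]; positivity
    · have h1 : ‖Ts f‖ ^ 2 = Q f := hTsnorm f
      have h2 : Q f ≤ ‖S f‖ * ‖f‖ := hre_bound (S f) f
      have h3 : ‖S f‖ = ‖T (Ts f)‖ := by rw [hScomp]
      have h4 : ‖T (Ts f)‖ ≤ qOpNorm T * ‖Ts f‖ := le_qOpNorm T hTQB _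
      have hn : (0 : ℝ) < ‖Ts f‖ := norm_pos_iff.mpr h0
      have h5 : ‖Ts f‖ ^ 2 ≤ (qOpNorm T * ‖f‖) * ‖Ts f‖ := by
        calc ‖Ts f‖ ^ 2 = Q f := h1
        _ ≤ ‖S f‖ * ‖f‖ := h2
        _ = ‖T (Ts f)‖ * ‖f‖ := by rw [h3]
        _ ≤ (qOpNorm T * ‖Ts f‖) * ‖f‖ := mul_le_mul_of_nonneg_right h4 (norm_nonneg f)
        _ = (qOpNorm T * ‖f‖) * ‖Ts f‖ := by ring
      exact real_le_of_sq_le_mul hn h5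
  have hSleT2 : qOpNorm S ≤ qOpNorm T ^ 2 := by
    apply qOpNorm_le S (by positivity)
    intro f
    calc ‖S f‖ = ‖T (Ts f)‖ := by rw [hScomp]
    _ ≤ qOpNorm T * ‖Ts f‖ := le_qOpNorm T hTQB _
    _ ≤ qOpNorm T * (qOpNorm T * ‖f‖) := mul_le_mul_of_nonneg_left (hTsBound f) hqT_nonneg
    _ = qOpNorm T ^ 2 * ‖f‖ := by ring
  have hT2leS : qOpNorm T ^ 2 ≤ qOpNorm S := by
    have h1 : qOpNorm T ≤ Real.sqrt Bsup := qOpNorm_le T (Real.sqrt_nonneg _) hTbound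
    calc qOpNorm T ^ 2 ≤ Real.sqrt Bsup ^ 2 := pow_le_pow_left₀ hqT_nonneg h1 2
    _ = Bsup := Real.sq_sqrt hBsup_nonneg
    _ = qOpNorm S := hSnorm.symm
  have hTdApp : ∀ f, Td f = Ts (Sinv f) := by
    intro f; rw [hTd]; rfl
  have hTdnorm : ∀ f : H, ‖Td f‖ ^ 2 = (⟪Sinv f, f⟫).re := by
    intro f
    rw [hTdApp, hTsnorm]
    show (⟪S (Sinv f), Sinv f⟫).re = _
    rw [herm, (hinv f).1]
  have hTdbound : ∀ f, ‖Td f‖ ≤ Real.sqrt Ainf⁻¹ * ‖f‖ := by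
    intro f
    have h1 : ‖Td f‖ ^ 2 ≤ Ainf⁻¹ * ‖f‖ ^ 2 := by
      rw [hTdnorm]
      calc (⟪Sinv f, f⟫).re ≤ ‖Sinv f‖ * ‖f‖ := hre_bound _ _
      _ ≤ (Ainf⁻¹ * ‖f‖) * ‖f‖ := mul_le_mul_of_nonneg_right (hSinvBound f) (norm_nonneg f)
      _ = Ainf⁻¹ * ‖f‖ ^ 2 := by ring
    calc ‖Td f‖ = Real.sqrt (‖Td f‖ ^ 2) := (Real.sqrt_sq (norm_nonneg _)).symm
    _ ≤ Real.sqrt (Ainf⁻¹ * ‖f‖ ^ 2) := Real.sqrt_le_sqrt h1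
    _ = Real.sqrt Ainf⁻¹ * ‖f‖ := by
        rw [Real.sqrt_mul (by positivity), Real.sqrt_sq (norm_nonneg f)]
  have hTdQB : QBounded Td := ⟨_, Real.sqrt_nonneg _, hTdbound⟩
  have hqTd_nonneg : (0 : ℝ) ≤ qOpNorm Td := qOpNorm_nonneg Td hTdQB
  have hTd2le : qOpNorm Td ^ 2 ≤ qOpNorm Sinv := by
    have h1 : qOpNorm Td ≤ Real.sqrt Ainf⁻¹ := qOpNorm_le Td (Real.sqrt_nonneg _) hTdbound
    calc qOpNorm Td ^ 2 ≤ Real.sqrt Ainf⁻¹ ^ 2 := pow_le_pow_left₀ hqTd_nonneg h1 2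
    _ = Ainf⁻¹ := Real.sq_sqrt (by positivity)
    _ = qOpNorm Sinv := by rw [hAinf_eq, inv_inv]
  have hSinvleTd2 : qOpNorm Sinv ≤ qOpNorm Td ^ 2 := by
    apply qOpNorm_le Sinv (by positivity)
    intro f
    rcases eq_or_ne (Sinv f) 0 with h0 | h0
    · rw [h0, norm_zero]; positivity
    · have h1 : ‖Sinv f‖ ^ 2 ≤ ‖⟪Sinv f, Sinv f⟫‖ := by
        rw [← qinner_self_re (Sinv f)]
        exact quat_re_le_norm _
      have h2 : ‖⟪Sinv f, Sinv f⟫‖ ^ 2 ≤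
          (⟪Sinv f, f⟫).re * (⟪Sinv (Sinv f), Sinv f⟫).re := csInv f (Sinv f)
      have h3 : (⟪Sinv f, f⟫).re = ‖Td f‖ ^ 2 := (hTdnorm f).symm
      have h4 : (⟪Sinv (Sinv f), Sinv f⟫).re = ‖Td (Sinv f)‖ ^ 2 := (hTdnorm (Sinv f)).symm
      have h5 : ‖Td f‖ ≤ qOpNorm Td * ‖f‖ := le_qOpNorm Td hTdQB f
      have h6 : ‖Td (Sinv f)‖ ≤ qOpNorm Td * ‖Sinv f‖ := le_qOpNorm Td hTdQB _
      have hn : (0 : ℝ) < ‖Sinv f‖ := norm_pos_iff.mpr h0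
      rw [h3, h4] at h2
      have h7 : (‖Sinv f‖ ^ 2) ^ 2 ≤ (qOpNorm Td ^ 2 * ‖f‖ * ‖Sinv f‖) ^ 2 := by
        calc (‖Sinv f‖ ^ 2) ^ 2 ≤ ‖⟪Sinv f, Sinv f⟫‖ ^ 2 := pow_le_pow_left₀ (sq_nonneg _) h1 2
        _ ≤ ‖Td f‖ ^ 2 * ‖Td (Sinv f)‖ ^ 2 := h2
        _ ≤ (qOpNorm Td * ‖f‖) ^ 2 * (qOpNorm Td * ‖Sinv f‖) ^ 2 := by
              apply mul_le_mul (pow_le_pow_left₀ (norm_nonneg _) h5 2)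
                (pow_le_pow_left₀ (norm_nonneg _) h6 2) (sq_nonneg _) (by positivity)
        _ = (qOpNorm Td ^ 2 * ‖f‖ * ‖Sinv f‖) ^ 2 := by ring
      have h8 : ‖Sinv f‖ ^ 2 ≤ (qOpNorm Td ^ 2 * ‖f‖) * ‖Sinv f‖ := by
        calc ‖Sinv f‖ ^ 2 ≤ qOpNorm Td ^ 2 * ‖f‖ * ‖Sinv f‖ :=
              real_le_of_sq_le_sq (sq_nonneg _) (by positivity) h7
        _ = (qOpNorm Td ^ 2 * ‖f‖) * ‖Sinv f‖ := by ring
      exact real_le_of_sq_le_mul hn h8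
  have hSinvTd : qOpNorm Sinv = qOpNorm Td ^ 2 := le_antisymm hSinvleTd2 hTd2le
  refine ⟨?_, ?_, ?_, ?_⟩
  · rw [one_div]; exact hAinf_eq
  · rw [hSinvTd]
  · exact hSnorm.symm
  · exact le_antisymm hSleT2 hT2leS
end
end

section
/- Let ℬ denote the set of Bessel sequences in H indexed by a countable set I. The map θ : ℬ → 𝔹(H, ℓ²(ℍ)) sending a Bessel sequence {u_i} to its transform (analysis) operator θ_u(x) = {⟨u_i, x⟩}_{i∈I} is a bijection, with inverse L ↦ {L*(v_i)}_{i∈I}, where {v_i} is the standard Hilbert basis of ℓ²(ℍ). -/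
noncomputable section
open MulOpposite

section Aux

variable {H : Type*} [QuatHilbert H]

private lemma qinner_neg_right (u v : H) : ⟪u, -v⟫ = -⟪u, v⟫ := by
  have h : (-v : H) = op (-1 : ℍ) • v := by simp
  rw [h, QuatHilbert.smul_right]; simp

private lemma qinner_sub_right (u v w : H) : ⟪u, v - w⟫ = ⟪u, v⟫ - ⟪u, w⟫ := by
  rw [sub_eq_add_neg, QuatHilbert.add_right, qinner_neg_right, sub_eq_add_neg]

private lemma eq_of_qinner_eq {a b : H} (h : ∀ x : H, ⟪a, x⟫ = ⟪b, x⟫) : a = b := by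
  have h0 : ⟪a - b, a - b⟫ = 0 := by
    have hx : ∀ x : H, ⟪x, a - b⟫ = 0 := by
      intro x
      rw [qinner_sub_right, QuatHilbert.conj_symm x a, QuatHilbert.conj_symm x b, h x, sub_self]
    exact hx (a - b)
  have hnorm : ‖a - b‖ ^ 2 = 0 := by rw [QuatHilbert.norm_sq, h0]; rfl
  have : ‖a - b‖ = 0 := by nlinarith [norm_nonneg (a - b)]
  rw [← sub_eq_zero]; exact norm_eq_zero.mp this

set_option maxHeartbeats 1000000 in
private lemma clm_bound {I : Type*} (L : H →L[ℍᵐᵒᵖ] lp2 I) :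
    ∃ C : ℝ, 0 < C ∧ ∀ x : H, ‖L x‖ ≤ C * ‖x‖ := by
  have hc := L.continuous.continuousAt (x := (0 : H))
  rw [Metric.continuousAt_iff] at hc
  obtain ⟨δ, hδ, hδ1⟩ := hc 1 one_pos
  refine ⟨2 / δ, by positivity, fun x => ?_⟩
  rcases eq_or_ne x 0 with rfl | hx
  · simp
  · have hxn : 0 < ‖x‖ := norm_pos_iff.mpr hx
    set r : ℝ := δ / 2 / ‖x‖ with hr
    have hrpos : 0 < r := by positivity
    set c : ℍ := (r : ℍ) with hcdef
    have hcnorm : ‖c‖ = r := by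
      simp [hcdef, Quaternion.norm_coe, Real.norm_eq_abs, abs_of_pos hrpos]
    have hcne : c ≠ 0 := by
      intro h0
      rw [hcdef] at h0
      exact hrpos.ne' (by exact_mod_cast congrArg QuaternionAlgebra.re h0)
    have hsmall : ‖op c • x‖ < δ := by
      rw [QuatHilbert.norm_op_smul, hcnorm, hr]
      have heq : ‖x‖ * (δ / 2 / ‖x‖) = δ / 2 := by field_simp
      rw [heq]; linarith
    have h1 : ‖L (op c • x)‖ < 1 := by
      have := hδ1 (x := op c • x) (by simpa [dist_zero_right] using hsmall)
      simpa [dist_zero_right] using this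
    have hLsmul : L (op c • x) = op c • L x := map_smul L (op c) x
    have hinv : L x = op c⁻¹ • (op c • L x) := by
      rw [smul_smul, ← op_mul, mul_inv_cancel₀ hcne, op_one, one_smul]
    have hle : ‖L x‖ ≤ ‖c⁻¹‖ * ‖op c • L x‖ := by
      calc ‖L x‖ = ‖op c⁻¹ • (op c • L x)‖ := by rw [← hinv]
        _ ≤ ‖op c⁻¹‖ * ‖op c • L x‖ := norm_smul_le _ _
        _ = ‖c⁻¹‖ * ‖op c • L x‖ := by rw [norm_op]
    have : ‖L x‖ ≤ ‖c⁻¹‖ * 1 := le_trans hle (by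
      have := (hLsmul ▸ h1).le
      exact mul_le_mul_of_nonneg_left this (norm_nonneg _))
    rw [mul_one, norm_inv, hcnorm] at this
    calc ‖L x‖ ≤ r⁻¹ := this
      _ = 2 / δ * ‖x‖ := by rw [hr]; field_simp

private lemma rpow_two_eq (a : ℝ) : a ^ ((2 : ENNReal).toReal) = a ^ (2 : ℕ) := by
  rw [ENNReal.toReal_ofNat]
  rw [show ((2:ℝ)) = ((2:ℕ):ℝ) by norm_num, Real.rpow_natCast]

set_option maxHeartbeats 1000000 in
private lemma part1 {I : Type*} (u : I → H) (hu : IsBessel u) :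
    ∃ θu : H →L[ℍᵐᵒᵖ] lp2 I, ∀ (x : H) (i : I), (θu x) i = ⟪u i, x⟫ := by
  obtain ⟨B, hB, hsum⟩ := hu
  have hmem : ∀ x : H, Memℓp (fun i => ⟪u i, x⟫) 2 := by
    intro x
    apply memℓp_gen
    have := (hsum x).1
    simpa [rpow_two_eq] using this
  set F : H →ₗ[ℍᵐᵒᵖ] lp2 I :=
    { toFun := fun x => ⟨fun i => ⟪u i, x⟫, hmem x⟩
      map_add' := fun x y => lp.ext (funext fun i => QuatHilbert.add_right (u i) x y)
      map_smul' := fun q x => lp.ext (funext fun i => by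
        have h1 : ⟪u i, q • x⟫ = ⟪u i, x⟫ * q.unop := by
          rw [show q • x = op q.unop • x by simp, QuatHilbert.smul_right]
        have h2 : (q • (⟨fun i => ⟪u i, x⟫, hmem x⟩ : lp2 I)) i
            = q • ⟪u i, x⟫ := by
          exact congrFun (lp.coeFn_smul q _) i
        show ⟪u i, q • x⟫ = (q • (⟨fun i => ⟪u i, x⟫, hmem x⟩ : lp2 I)) i
        rw [h1, h2]
        rw [show q • ⟪u i, x⟫ = op q.unop • ⟪u i, x⟫ by simp, op_smul_eq_mul]) } with hF
  have hbound : ∀ x : H, ‖F x‖ ≤ Real.sqrt B * ‖x‖ := by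
    intro x
    have hn : ‖F x‖ ^ (2:ℕ) = ∑' i, ‖⟪u i, x⟫‖ ^ 2 := by
      have := lp.norm_rpow_eq_tsum (p := 2) (by norm_num) (F x)
      rw [rpow_two_eq] at this
      rw [this]
      congr 1
      funext i
      rw [rpow_two_eq]
      rfl
    have hle : ‖F x‖ ^ 2 ≤ (Real.sqrt B * ‖x‖) ^ 2 := by
      rw [mul_pow, Real.sq_sqrt hB.le, hn]
      exact (hsum x).2
    nlinarith [norm_nonneg (F x), norm_nonneg x, Real.sqrt_nonneg B,
      mul_nonneg (Real.sqrt_nonneg B) (norm_nonneg x)]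
  exact ⟨F.mkContinuous (Real.sqrt B) hbound, fun x i => rfl⟩

set_option maxHeartbeats 1000000 in
private lemma part3key {I : Type*} [DecidableEq I] (L : H →L[ℍᵐᵒᵖ] lp2 I)
    (Ls : lp2 I →L[ℍᵐᵒᵖ] H)
    (hadj : ∀ (x : H) (q : lp2 I), l2inner (L x) q = ⟪x, Ls q⟫) :
    ∀ (x : H) (i : I), (L x) i = ⟪Ls (lp.single 2 i 1), x⟫ := by
  intro x i
  have h1 : l2inner (L x) (lp.single 2 i 1) = star ((L x) i) := by
    unfold l2inner
    rw [tsum_eq_single i]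
    · rw [lp.single_apply_self, mul_one]
    · intro j hj
      rw [lp.single_apply_ne 2 i 1 hj, mul_zero]
  have h2 := hadj x (lp.single 2 i 1)
  rw [h1] at h2
  rw [QuatHilbert.conj_symm, ← h2, star_star]

set_option maxHeartbeats 1000000 in
private lemma norm_sq_lp2 {I : Type*} (f : lp2 I) : ‖f‖ ^ (2:ℕ) = ∑' i, ‖f i‖ ^ 2 := by
  have := lp.norm_rpow_eq_tsum (p := 2) (by norm_num) f
  rw [rpow_two_eq] at this
  rw [this]
  congr 1
  funext i
  rw [rpow_two_eq]

set_option maxHeartbeats 1000000 in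
private lemma part3bessel {I : Type*} [DecidableEq I] (L : H →L[ℍᵐᵒᵖ] lp2 I)
    (Ls : lp2 I →L[ℍᵐᵒᵖ] H)
    (hadj : ∀ (x : H) (q : lp2 I), l2inner (L x) q = ⟪x, Ls q⟫) :
    IsBessel (fun i => Ls (lp.single 2 i 1)) := by
  obtain ⟨C, hC, hCle⟩ := clm_bound L
  refine ⟨C ^ 2, by positivity, fun x => ?_⟩
  have hkey : (fun i => ‖⟪Ls (lp.single 2 i 1), x⟫‖ ^ 2) = fun i => ‖(L x) i‖ ^ 2 := by
    funext i; rw [← part3key L Ls hadj x i]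
  constructor
  · rw [show (fun i => ‖⟪(fun i => Ls (lp.single 2 i 1)) i, x⟫‖ ^ 2)
        = fun i => ‖(L x) i‖ ^ 2 from hkey]
    have := (lp.memℓp (L x)).summable (p := 2) (by norm_num)
    simpa [rpow_two_eq] using this
  · rw [show (fun i => ‖⟪(fun i => Ls (lp.single 2 i 1)) i, x⟫‖ ^ 2)
        = fun i => ‖(L x) i‖ ^ 2 from hkey, ← norm_sq_lp2]
    calc ‖L x‖ ^ 2 ≤ (C * ‖x‖) ^ 2 := by
          have := hCle x
          nlinarith [norm_nonneg (L x), norm_nonneg x]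
      _ = C ^ 2 * ‖x‖ ^ 2 := by ring

end Aux

/-- The map sending a Bessel sequence `{u_i}` to its transform (analysis)
operator `θ_u(x) = {⟨u_i, x⟩}_i ∈ 𝔹(H, ℓ²(ℍ))` is a bijection, with inverse
`L ↦ {L*(v_i)}_i` where `{v_i}` is the standard Hilbert basis of ℓ²(ℍ). -/
theorem stmt19 {H : Type*} [QuatHilbert H] {I : Type*} [Countable I] [DecidableEq I] :
    -- well defined: each Bessel sequence has a bounded transform operator
    (∀ u : I → H, IsBessel u →
      ∃ θu : H →L[ℍᵐᵒᵖ] lp2 I, ∀ (x : H) (i : I), (θu x) i = ⟪u i, x⟫) ∧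
    -- injective
    (∀ u w : I → H, IsBessel u → IsBessel w →
      (∀ (x : H) (i : I), ⟪u i, x⟫ = ⟪w i, x⟫) → u = w) ∧
    -- surjective, with inverse L ↦ {L*(v_i)}_i
    (∀ (L : H →L[ℍᵐᵒᵖ] lp2 I) (Ls : lp2 I →L[ℍᵐᵒᵖ] H),
      (∀ (x : H) (q : lp2 I), l2inner (L x) q = ⟪x, Ls q⟫) →
      IsBessel (fun i => Ls (lp.single 2 i 1)) ∧
      ∀ (x : H) (i : I), (L x) i = ⟪Ls (lp.single 2 i 1), x⟫) := by
  refine ⟨fun u hu => part1 u hu,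
    fun u w _ _ h => funext fun i => eq_of_qinner_eq (fun x => h x i),
    fun L Ls hadj => ⟨part3bessel L Ls hadj, part3key L Ls hadj⟩⟩
end
end
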